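/- For any c-cluster I of Q_c, the root configuration R(I) = (r(I,i))_{i∈I} is a linear basis of V = ℝⁿ, and its elements are pairwise distinct. -/

import Mathlib

open scoped Classical

noncomputable section

namespace CP

variable {B : Type} [DecidableEq B] [Fintype B] [Nonempty B]
variable {W : Type} [Group W]

/-- An arbitrary element of `B`, used as a junk value for `List.getD`. -/
def arb (B : Type) [Nonempty B] : B := Classical.arbitrary B

/-- The bilinear form of the standard geometric representation of a Coxeter system:
`⟨αᵢ, αⱼ⟩ = -cos (π / Mᵢⱼ)`, extended bilinearly. -/
def bil (M : CoxeterMatrix B) (u v : B → ℝ) : ℝ :=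
  ∑ i, ∑ j, u i * v j * (-(Real.cos (Real.pi / (M i j))))

/-- The simple roots: the standard basis vectors of `V = ℝ^B`. -/
def sroot (i : B) : B → ℝ := Pi.single i 1

/-- The root system: the orbit of the simple roots under `W`. -/
def rootSystem (π : Representation ℝ W (B → ℝ)) : Set (B → ℝ) :=
  {v | ∃ (w : W) (i : B), v = π w (sroot i)}

/-- The positive roots: roots with non-negative coordinates on the simple roots. -/
def posRoots (π : Representation ℝ W (B → ℝ)) : Set (B → ℝ) :=
  {v ∈ rootSystem π | ∀ i, 0 ≤ v i}

/-- The almost positive roots: positive roots plus negatives of simple roots. -/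
def almostPos (π : Representation ℝ W (B → ℝ)) : Set (B → ℝ) :=
  posRoots π ∪ Set.range (fun i => -sroot i)

variable {M : CoxeterMatrix B}

/-- `l` is a reduced word for `w`. -/
def IsRW (cs : CoxeterSystem M W) (w : W) (l : List B) : Prop :=
  cs.wordProd l = w ∧ l.length = cs.length w

/-- The letter of the infinite word `c^∞` at position `t` (`0`-indexed). -/
def cInf [Nonempty B] (cword : List B) (t : ℕ) : B := cword.getD (t % cword.length) (arb B)

/-- `f ≤ g` in the lexicographic order on sequences of positions. -/
def LexLE {N : ℕ} (f g : Fin N → ℕ) : Prop :=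
  f = g ∨ ∃ k, (∀ l, l < k → f l = g l) ∧ f k < g k

/-- The subword of `Q` indexed by the complement of `I` (positions are `0`-indexed). -/
def complWord [Nonempty B] (Q : List B) (I : Finset ℕ) : List B :=
  ((List.range Q.length).filter (· ∉ I)).map (fun k => Q.getD k (arb B))

/-- `I` is a `c`-cluster of the word `Q`: the complementary subword is a reduced word
for the longest element `w₀`. -/
def IsCluster (cs : CoxeterSystem M W) (w₀ : W) (Q : List B) (I : Finset ℕ) : Prop :=
  I ⊆ Finset.range Q.length ∧ IsRW cs w₀ (complWord Q I)

/-- The root function `r(I, j)`. -/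
def rootFn (cs : CoxeterSystem M W) (π : Representation ℝ W (B → ℝ))
    (Q : List B) (I : Finset ℕ) (j : ℕ) : B → ℝ :=
  π (cs.wordProd (((List.range j).filter (· ∉ I)).map (fun x => Q.getD x (arb B))))
    (sroot (Q.getD j (arb B)))

/-- `ρ` is a family of coefficients expanding `r(I, j)` on the root configuration
`R(I) = (r(I, i))_{i ∈ I}`. -/
def IsExpansion (cs : CoxeterSystem M W) (π : Representation ℝ W (B → ℝ))
    (Q : List B) (I : Finset ℕ) (j : ℕ) (ρ : ℕ → ℝ) : Prop :=
  rootFn cs π Q I j = ∑ i ∈ I, ρ i • rootFn cs π Q I i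

/-- The rotation map `τ_c` on positions of the word `Q` (`0`-indexed): the position of the next
occurrence of the letter `q_i` if it exists, and the first occurrence of `η (q_i) = w₀ q_i w₀`
otherwise. -/
def rot [Nonempty B] (Q : List B) (η : B → B) (i : ℕ) : ℕ :=
  if h : ∃ j, j < Q.length ∧ i < j ∧ Q.getD j (arb B) = Q.getD i (arb B) then Nat.find h
  else if h2 : ∃ j, j < Q.length ∧ Q.getD j (arb B) = η (Q.getD i (arb B)) then Nat.find h2
  else i

/-- The map `ϑ_c` from positions of the word `Q_c = cword ++ sw` to almost positive roots. -/
def theta (cs : CoxeterSystem M W) (π : Representation ℝ W (B → ℝ))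
    (cword sw : List B) (i : ℕ) : B → ℝ :=
  if i < cword.length then -sroot (cword.getD i (arb B))
  else π (cs.wordProd (sw.take (i - cword.length))) (sroot (sw.getD (i - cword.length) (arb B)))

/-- The rotation map `τ_c` on almost positive roots. -/
def rotRoot (cs : CoxeterSystem M W) (π : Representation ℝ W (B → ℝ))
    (cword : List B) (v : B → ℝ) : B → ℝ :=
  if h : ∃ k : Fin cword.length, v = -sroot (cword.get k) then
    π (cs.wordProd (cword.take (Classical.choose h).1)) (sroot (cword.get (Classical.choose h)))
  else if h2 : ∃ k : Fin cword.length,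
      v = π (cs.wordProd (cword.drop ((k : ℕ) + 1)).reverse) (sroot (cword.get k)) then
    -sroot (cword.get (Classical.choose h2))
  else π (cs.wordProd cword) v

/-- One elementary commutation of two consecutive commuting letters. -/
def CommStep (cs : CoxeterSystem M W) (u v : List B) : Prop :=
  ∃ (x y : List B) (s t : B), cs.simple s * cs.simple t = cs.simple t * cs.simple s ∧
    u = x ++ s :: t :: y ∧ v = x ++ t :: s :: y

/-- The cyclic shift on positions accompanying the jump of the first letter of a word with
`m` letters: `σ(k) = k - 1` for `k ≥ 1`, and `σ(0) = m - 1` (positions are `0`-indexed). -/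
def shift (m : ℕ) (k : ℕ) : ℕ := if k = 0 then m - 1 else k - 1

end CP

/-!
Any two clusters of a word `Q` are joined by a chain of flips `I ↦ (I \ {i}) ∪ {j}`, by
induction on `Q` from the right: clusters containing the last position come from clusters of the
shorter word, clusters avoiding it are clusters of the shorter word for `w * s a`, and the exchange
condition produces a flip from the first kind to the second. Across a flip with `i < j`, `r(J, j)`
is a nonzero multiple of `r(I, i)` (both are roots of the same reflection) and every other
`r(J, k)` differs from `r(I, k)` by a multiple of `r(I, i)`, so the span of the root configuration
does not change. For the cluster `{0, …, n - 1}` of `Q_c = c w₀(c)` the root configuration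
consists of the simple roots, which span `V`; as every cluster has `n = dim V` elements, every root
configuration is a basis.

The exchange condition comes from the fact that the parity of the number of occurrences of a
reflection in the right inversion sequence of a word only depends on the product of the word, which
is read off from an action of `W` on `W × ℤˣ`.
-/

namespace CoxeterSystem

open List

variable {B : Type*} {W : Type*} [Group W] {M : CoxeterMatrix B} (cs : CoxeterSystem M W)

noncomputable def signFlip (i : B) : Equiv.Perm (W × ℤˣ) :=
  Function.Involutive.toPerm
    (fun x => (cs.simple i * x.1 * cs.simple i, if x.1 = cs.simple i then -x.2 else x.2))
    (by
      rintro ⟨t, ε⟩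
      by_cases h : t = cs.simple i <;> simp [h, mul_assoc, mul_eq_one_iff_eq_inv])

theorem signFlip_apply (i : B) (x : W × ℤˣ) :
    cs.signFlip i x =
      (cs.simple i * x.1 * cs.simple i, if x.1 = cs.simple i then -x.2 else x.2) :=
  rfl

theorem prod_map_signFlip_apply (ω : List B) (t : W) (ε : ℤˣ) :
    (ω.map cs.signFlip).prod (t, ε) =
      (cs.wordProd ω * t * (cs.wordProd ω)⁻¹, (-1) ^ (cs.rightInvSeq ω).count t * ε) := by
  induction ω generalizing t ε with
  | nil => simp
  | cons i ω ih =>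
    have hcond : cs.wordProd ω * t * (cs.wordProd ω)⁻¹ = cs.simple i ↔
        (cs.wordProd ω)⁻¹ * cs.simple i * cs.wordProd ω = t := by
      constructor <;> intro h <;> rw [← h] <;> group
    rw [map_cons, prod_cons, Equiv.Perm.mul_apply, ih, signFlip_apply]
    refine Prod.ext (by simp only [wordProd_cons, mul_inv_rev, inv_simple]; group) ?_
    simp only [rightInvSeq, count_cons, beq_iff_eq, hcond]
    split_ifs <;> simp [pow_succ]

theorem prod_reverse_map_alternatingWord {N : Type*} [Monoid N] (f : B → N) (i j : B) (m : ℕ) :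
    ((alternatingWord j i (2 * m)).reverse.map f).prod = (f i * f j) ^ m := by
  induction m with
  | zero => simp [alternatingWord]
  | succ m ih =>
    rw [show 2 * (m + 1) = 2 * m + 1 + 1 by ring, alternatingWord_succ', alternatingWord_succ']
    simp only [map_reverse] at ih ⊢
    simp [ih, pow_succ]

theorem even_count_leftInvSeq_alternatingWord (i j : B) (t : W) :
    Even ((cs.leftInvSeq (alternatingWord j i (2 * M i j))).count t) := by
  have hlis : cs.leftInvSeq (alternatingWord j i (2 * M i j)) =
      (range (M i j + M i j)).map (fun k => cs.simple j * (cs.simple i * cs.simple j) ^ k) := by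
    refine ext_getElem (by simp; ring) fun k hk _ => ?_
    rw [getElem_leftInvSeq_alternatingWord cs j i _ k (by simpa using hk),
      prod_alternatingWord_eq_mul_pow]
    simp [show (2 * k + 1) / 2 = k by omega]
  have hperiod : ∀ k, cs.simple j * (cs.simple i * cs.simple j) ^ (M i j + k) =
      cs.simple j * (cs.simple i * cs.simple j) ^ k := by
    intro k
    rw [pow_add, simple_mul_simple_pow, one_mul]
  rw [hlis, range_add, map_append, map_map, Function.comp_def]
  simp only [hperiod, count_append]
  exact ⟨_, rfl⟩

theorem isLiftable_signFlip : M.IsLiftable cs.signFlip := by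
  intro i j
  ext1 ⟨t, ε⟩
  rw [← prod_reverse_map_alternatingWord, prod_map_signFlip_apply, wordProd_reverse,
    prod_alternatingWord_eq_mul_pow, rightInvSeq_reverse, count_reverse,
    (cs.even_count_leftInvSeq_alternatingWord i j t).neg_one_pow]
  simp

noncomputable def signHom : W →* Equiv.Perm (W × ℤˣ) :=
  cs.lift ⟨cs.signFlip, cs.isLiftable_signFlip⟩

theorem signHom_wordProd (ω : List B) :
    cs.signHom (cs.wordProd ω) = (ω.map cs.signFlip).prod := by
  simp [signHom, wordProd, map_list_prod, map_map, Function.comp_def]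

theorem neg_one_pow_count_rightInvSeq_congr {ω ω' : List B}
    (h : cs.wordProd ω = cs.wordProd ω') (t : W) :
    (-1 : ℤˣ) ^ (cs.rightInvSeq ω).count t = (-1) ^ (cs.rightInvSeq ω').count t := by
  have := congrArg (fun φ => (φ (t, 1)).2) (congrArg cs.signHom h)
  simpa [signHom_wordProd, prod_map_signFlip_apply] using this

theorem simple_mem_rightInvSeq_of_isRightDescent {ω : List B} {j : B}
    (hj : cs.IsRightDescent (cs.wordProd ω) j) : cs.simple j ∈ cs.rightInvSeq ω := by
  obtain ⟨ω₁, hω₁, hprod₁⟩ := cs.exists_isReduced (cs.wordProd ω * cs.simple j)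
  have hprod : cs.wordProd (ω₁ ++ [j]) = cs.wordProd ω := by
    simp [wordProd_append, ← hprod₁]
  have hred : cs.IsReduced (ω₁ ++ [j]) := by
    have hlt : cs.length (cs.wordProd ω * cs.simple j) < cs.length (cs.wordProd ω) := hj
    have := cs.length_mul_simple (cs.wordProd ω) j
    rw [IsReduced, hprod, length_append, length_singleton, ← hω₁.eq, ← hprod₁]
    omega
  have hcount : (cs.rightInvSeq (ω₁ ++ [j])).count (cs.simple j) = 1 := by
    refine count_eq_one_of_mem hred.nodup_rightInvSeq ?_
    rw [← concat_eq_append, rightInvSeq_concat, concat_eq_append]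
    exact mem_concat_self ..
  -- the parity of the number of occurrences of `s j` does not depend on the word
  have hpar := cs.neg_one_pow_count_rightInvSeq_congr hprod (cs.simple j)
  rw [hcount, pow_one] at hpar
  refine count_pos_iff.mp (Nat.pos_of_ne_zero fun h0 => ?_)
  rw [h0, pow_zero] at hpar
  exact absurd hpar (by decide)

theorem exists_wordProd_eraseIdx_of_isRightDescent {ω : List B} {j : B}
    (hj : cs.IsRightDescent (cs.wordProd ω) j) :
    ∃ k < ω.length, cs.wordProd (ω.eraseIdx k) = cs.wordProd ω * cs.simple j := by
  obtain ⟨k, hk, hget⟩ := mem_iff_getElem.mp (cs.simple_mem_rightInvSeq_of_isRightDescent hj)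
  refine ⟨k, by simpa using hk, ?_⟩
  rw [← wordProd_mul_getD_rightInvSeq, getD_eq_getElem _ _ hk, hget]

end CoxeterSystem

namespace CP

open Submodule

def complPos (m : ℕ) (I : Finset ℕ) : List ℕ := (List.range m).filter (· ∉ I)

theorem mem_complPos {m x : ℕ} {I : Finset ℕ} : x ∈ complPos m I ↔ x < m ∧ x ∉ I := by
  simp [complPos]

theorem nodup_complPos (m : ℕ) (I : Finset ℕ) : (complPos m I).Nodup :=
  List.nodup_range.filter _

theorem complPos_insert_getElem {m : ℕ} {K : Finset ℕ} {k : ℕ}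
    (hk : k < (complPos m K).length) :
    complPos m (insert (complPos m K)[k] K) = (complPos m K).eraseIdx k := by
  rw [← (nodup_complPos m K).erase_getElem k hk, (nodup_complPos m K).erase_eq_filter]
  unfold complPos
  rw [List.filter_filter]
  exact List.filter_congr fun x _ => by by_cases hx : x ∈ K <;> simp [hx, bne, beq_eq_decide]

theorem length_complPos {m : ℕ} {I : Finset ℕ} (h : I ⊆ Finset.range m) :
    (complPos m I).length + I.card = m := by
  have hcard : (complPos m I).length = ((Finset.range m).filter (· ∉ I)).card := by
    rw [complPos, Finset.card_def, Finset.filter_val, Finset.range_val, Multiset.range,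
      Multiset.filter_coe, Multiset.coe_card]
  have := Finset.card_le_card h
  rw [hcard, ← Finset.sdiff_eq_filter, Finset.card_sdiff_of_subset h]
  simp only [Finset.card_range] at this ⊢
  omega

theorem complPos_add_range (n N : ℕ) :
    complPos (n + N) (Finset.range n) = (List.range N).map (n + ·) := by
  rw [complPos, List.range_add, List.filter_append, List.filter_eq_nil_iff.mpr (by simp),
    List.filter_eq_self.mpr (by simp), List.nil_append]

theorem isRW_append_singleton_iff {B W : Type} [Group W] {M : CoxeterMatrix B}
    {cs : CoxeterSystem M W} {w : W} {l : List B} {a : B} :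
    IsRW cs w (l ++ [a]) ↔
      IsRW cs (w * cs.simple a) l ∧ cs.length (w * cs.simple a) < cs.length w := by
  have hdich := cs.length_mul_simple w a
  simp only [IsRW, cs.wordProd_append, cs.wordProd_singleton, List.length_append,
    List.length_singleton, ← eq_mul_inv_iff_mul_eq, cs.inv_simple]
  constructor
  · rintro ⟨hprod, hlen⟩
    have := cs.length_wordProd_le l
    rw [hprod] at this
    exact ⟨⟨hprod, by omega⟩, by omega⟩
  · rintro ⟨⟨hprod, hlen⟩, hlt⟩
    exact ⟨hprod, by omega⟩

section Clusters

variable {B : Type} [Nonempty B] {M : CoxeterMatrix B} {W : Type} [Group W]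
  {cs : CoxeterSystem M W}

theorem complWord_eq_map_complPos (Q : List B) (I : Finset ℕ) :
    complWord Q I = (complPos Q.length I).map fun x => Q.getD x (arb B) :=
  rfl

theorem complWord_append_singleton (Q : List B) (a : B) (I : Finset ℕ) :
    complWord (Q ++ [a]) I = complWord Q I ++ if Q.length ∈ I then [] else [a] := by
  simp only [complWord, List.length_append, List.length_singleton, List.range_succ,
    List.filter_append, List.map_append]
  congr 1
  · exact List.map_congr_left fun x hx =>
      List.getD_append _ _ _ _ (List.mem_range.mp (List.mem_of_mem_filter hx))
  · split_ifs with h <;> simp [h]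

theorem complWord_insert_length (Q : List B) (K : Finset ℕ) :
    complWord Q (insert Q.length K) = complWord Q K := by
  unfold complWord
  congr 1
  exact List.filter_congr fun x hx => by simp [(List.mem_range.mp hx).ne]

theorem complWord_append_range_length (u v : List B) :
    complWord (u ++ v) (Finset.range u.length) = v := by
  rw [complWord_eq_map_complPos, List.length_append, complPos_add_range, List.map_map]
  refine List.ext_getElem (by simp) fun k _ hk => ?_
  simp [hk]

theorem IsCluster.card_add_length {w : W} {Q : List B} {I : Finset ℕ}
    (h : IsCluster cs w Q I) : I.card + cs.length w = Q.length := by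
  have := length_complPos h.1
  rw [← h.2.2, complWord_eq_map_complPos, List.length_map]
  omega

theorem isCluster_append_singleton_insert_iff {w : W} {Q : List B} {a : B} {K : Finset ℕ}
    (hK : Q.length ∉ K) :
    IsCluster cs w (Q ++ [a]) (insert Q.length K) ↔ IsCluster cs w Q K := by
  simp only [IsCluster, complWord_append_singleton, Finset.mem_insert_self, if_true,
    List.append_nil, complWord_insert_length, List.length_append, List.length_singleton,
    Finset.range_add_one, Finset.insert_subset_iff, Finset.mem_insert_self, true_and,
    Finset.subset_insert_iff_of_notMem hK]

theorem isCluster_append_singleton_iff_of_notMem {w : W} {Q : List B} {a : B} {I : Finset ℕ}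
    (hI : Q.length ∉ I) :
    IsCluster cs w (Q ++ [a]) I ↔
      IsCluster cs (w * cs.simple a) Q I ∧ cs.length (w * cs.simple a) < cs.length w := by
  simp only [IsCluster, complWord_append_singleton, if_neg hI, isRW_append_singleton_iff,
    List.length_append, List.length_singleton, Finset.range_add_one,
    Finset.subset_insert_iff_of_notMem hI, and_assoc]

theorem isCluster_range_length {w : W} (u : List B) {v : List B} (hv : IsRW cs w v) :
    IsCluster cs w (u ++ v) (Finset.range u.length) :=
  ⟨by simp, by rwa [complWord_append_range_length]⟩

end Clusters

section Flips

variable {B : Type} [Nonempty B] {M : CoxeterMatrix B} {W : Type} [Group W]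

def IsFlip (cs : CoxeterSystem M W) (w : W) (Q : List B) (I J : Finset ℕ) : Prop :=
  IsCluster cs w Q I ∧ IsCluster cs w Q J ∧ ∃ i ∈ I, ∃ j ∉ I, J = insert j (I.erase i)

variable {cs : CoxeterSystem M W}

theorem IsFlip.symm {w : W} {Q : List B} {I J : Finset ℕ} (h : IsFlip cs w Q I J) :
    IsFlip cs w Q J I := by
  obtain ⟨hI, hJ, i, hi, j, hj, rfl⟩ := h
  refine ⟨hJ, hI, j, by simp, i, by simp [ne_of_mem_of_not_mem hi hj], ?_⟩
  rw [Finset.erase_insert fun h => hj (Finset.mem_of_mem_erase h), Finset.insert_erase hi]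

theorem IsFlip.insert_length {w : W} {Q : List B} {a : B} {I J : Finset ℕ}
    (h : IsFlip cs w Q I J) :
    IsFlip cs w (Q ++ [a]) (insert Q.length I) (insert Q.length J) := by
  obtain ⟨hI, hJ, i, hi, j, hj, rfl⟩ := h
  have hlt : ∀ {K}, IsCluster cs w Q K → ∀ x ∈ K, x < Q.length := fun hK x hx =>
    Finset.mem_range.mp (hK.1 hx)
  have hpI := (hlt hI i hi).ne'
  have hpJ := (hlt hJ j (by simp)).ne
  refine ⟨(isCluster_append_singleton_insert_iff fun h => lt_irrefl _ (hlt hI _ h)).mpr hI,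
    (isCluster_append_singleton_insert_iff fun h => lt_irrefl _ (hlt hJ _ h)).mpr hJ,
    i, Finset.mem_insert_of_mem hi, j, by simp [hj, hpJ], ?_⟩
  rw [Finset.erase_insert_of_ne hpI, Finset.insert_comm]

theorem IsFlip.append_singleton {w : W} {Q : List B} {a : B} {I J : Finset ℕ}
    (hlt : cs.length (w * cs.simple a) < cs.length w) (h : IsFlip cs (w * cs.simple a) Q I J) :
    IsFlip cs w (Q ++ [a]) I J := by
  obtain ⟨hI, hJ, hIJ⟩ := h
  have hp : ∀ {K}, IsCluster cs (w * cs.simple a) Q K → Q.length ∉ K := fun hK h =>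
    (Finset.mem_range.mp (hK.1 h)).false
  exact ⟨(isCluster_append_singleton_iff_of_notMem (hp hI)).mpr ⟨hI, hlt⟩,
    (isCluster_append_singleton_iff_of_notMem (hp hJ)).mpr ⟨hJ, hlt⟩, hIJ⟩

theorem IsCluster.exists_isFlip_notMem {w : W} {Q : List B} {a : B} {I : Finset ℕ}
    (hI : IsCluster cs w (Q ++ [a]) I) (hp : Q.length ∈ I)
    (hlt : cs.length (w * cs.simple a) < cs.length w) :
    ∃ J, IsFlip cs w (Q ++ [a]) I J ∧ Q.length ∉ J := by
  set K := I.erase Q.length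
  have hK : IsCluster cs w Q K := (isCluster_append_singleton_insert_iff
    (Finset.notMem_erase _ _)).mp (by rwa [Finset.insert_erase hp])
  obtain ⟨k, hk, hprod⟩ := cs.exists_wordProd_eraseIdx_of_isRightDescent (j := a)
    (by rw [hK.2.1]; exact hlt)
  have hkK : k < (complPos Q.length K).length := by simpa [complWord_eq_map_complPos] using hk
  set x := (complPos Q.length K)[k]
  have hx : x < Q.length ∧ x ∉ K := mem_complPos.mp (List.getElem_mem hkK)
  have hxJ : IsCluster cs (w * cs.simple a) Q (insert x K) := by
    have hword : complWord Q (insert x K) = (complWord Q K).eraseIdx k := by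
      rw [complWord_eq_map_complPos, complPos_insert_getElem hkK, ← List.eraseIdx_map]
      rfl
    refine ⟨Finset.insert_subset (Finset.mem_range.mpr hx.1) hK.1, ?_, ?_⟩
    · rw [hword, hprod, hK.2.1]
    · have := cs.length_mul_simple w a
      rw [hword, List.length_eraseIdx_of_lt hk, hK.2.2]
      omega
  have hpJ : Q.length ∉ insert x K := by simp [hx.1.ne', K]
  refine ⟨insert x K, ⟨hI, (isCluster_append_singleton_iff_of_notMem hpJ).mpr ⟨hxJ, hlt⟩,
    Q.length, hp, x, fun hxI => hx.2 (Finset.mem_erase.mpr ⟨hx.1.ne, hxI⟩), rfl⟩, hpJ⟩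

open Relation in
theorem reflTransGen_isFlip {Q : List B} {w : W} {I J : Finset ℕ} (hI : IsCluster cs w Q I)
    (hJ : IsCluster cs w Q J) : ReflTransGen (IsFlip cs w Q) I J := by
  induction Q using List.reverseRecOn generalizing w I J with
  | nil =>
    have hI0 : I = ∅ := Finset.subset_empty.mp (by simpa using hI.1)
    have hJ0 : J = ∅ := Finset.subset_empty.mp (by simpa using hJ.1)
    rw [hI0, hJ0]
  | append_singleton Q a ih =>
    have avoid : ∀ {I J}, IsCluster cs w (Q ++ [a]) I → Q.length ∉ I →
        IsCluster cs w (Q ++ [a]) J → Q.length ∉ J →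
        ReflTransGen (IsFlip cs w (Q ++ [a])) I J := by
      intro I J hI hpI hJ hpJ
      obtain ⟨hI', hlt⟩ := (isCluster_append_singleton_iff_of_notMem hpI).mp hI
      exact ReflTransGen.mono (fun _ _ h => h.append_singleton hlt) _ _
        (ih hI' ((isCluster_append_singleton_iff_of_notMem hpJ).mp hJ).1)
    have cross : ∀ {I J}, IsCluster cs w (Q ++ [a]) I → Q.length ∈ I →
        IsCluster cs w (Q ++ [a]) J → Q.length ∉ J →
        ReflTransGen (IsFlip cs w (Q ++ [a])) I J := by
      intro I J hI hpI hJ hpJ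
      obtain ⟨K, hflip, hpK⟩ := hI.exists_isFlip_notMem hpI
        ((isCluster_append_singleton_iff_of_notMem hpJ).mp hJ).2
      exact .head hflip (avoid hflip.2.1 hpK hJ hpJ)
    by_cases hpI : Q.length ∈ I <;> by_cases hpJ : Q.length ∈ J
    · have hdown : ∀ {K}, IsCluster cs w (Q ++ [a]) K → Q.length ∈ K →
          IsCluster cs w Q (K.erase Q.length) := fun hK hpK =>
        (isCluster_append_singleton_insert_iff (Finset.notMem_erase _ _)).mp
          (by rwa [Finset.insert_erase hpK])
      have := ReflTransGen.lift (insert Q.length) (fun _ _ h => h.insert_length (a := a))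
        _ _ (ih (hdown hI hpI) (hdown hJ hpJ))
      rwa [Function.onFun, Finset.insert_erase hpI, Finset.insert_erase hpJ] at this
    · exact cross hI hpI hJ hpJ
    · exact reflTransGen_swap.mp
        (ReflTransGen.mono (fun _ _ h => IsFlip.symm h) _ _ (cross hJ hpJ hI hpI))
    · exact avoid hI hpI hJ hpJ

end Flips

section Prefix

variable {B : Type} [Nonempty B] {M : CoxeterMatrix B} {W : Type} [Group W]
  (cs : CoxeterSystem M W)

def prefixProd (Q : List B) (I : Finset ℕ) (k : ℕ) : W :=
  cs.wordProd ((complPos k I).map fun x => Q.getD x (arb B))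

-- the reflection whose root is `rootFn cs rep Q I i`
def prefixRefl (Q : List B) (I : Finset ℕ) (i : ℕ) : W :=
  prefixProd cs Q I i * cs.simple (Q.getD i (arb B)) * (prefixProd cs Q I i)⁻¹

variable {cs}

theorem rootFn_eq_prefixProd [DecidableEq B] (rep : Representation ℝ W (B → ℝ)) (Q : List B)
    (I : Finset ℕ) (k : ℕ) :
    rootFn cs rep Q I k = rep (prefixProd cs Q I k) (sroot (Q.getD k (arb B))) :=
  rfl

theorem IsCluster.prefixProd_length {w : W} {Q : List B} {I : Finset ℕ}
    (h : IsCluster cs w Q I) : prefixProd cs Q I Q.length = w :=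
  h.2.1

theorem prefixProd_zero (Q : List B) (I : Finset ℕ) : prefixProd cs Q I 0 = 1 := by
  simp [prefixProd, complPos]

theorem prefixProd_succ (Q : List B) (I : Finset ℕ) (k : ℕ) :
    prefixProd cs Q I (k + 1) =
      prefixProd cs Q I k * if k ∈ I then 1 else cs.simple (Q.getD k (arb B)) := by
  unfold prefixProd complPos
  rw [List.range_succ, List.filter_append, List.map_append, cs.wordProd_append]
  split_ifs with hk <;> simp [hk]

theorem prefixProd_mul_inv_congr {Q : List B} {I J : Finset ℕ} {a b : ℕ} (hab : a ≤ b)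
    (hIJ : ∀ x, a ≤ x → x < b → (x ∈ I ↔ x ∈ J)) :
    prefixProd cs Q J b * (prefixProd cs Q I b)⁻¹ =
      prefixProd cs Q J a * (prefixProd cs Q I a)⁻¹ := by
  induction b, hab using Nat.le_induction with
  | base => rfl
  | succ n han ih =>
    rw [prefixProd_succ, prefixProd_succ, ← ih fun x hax hxn => hIJ x hax (by omega),
      if_congr (hIJ n han (by omega)).symm rfl rfl]
    split_ifs <;> group

theorem prefixProd_eq_of_agree_lt {Q : List B} {I J : Finset ℕ} {k : ℕ}
    (h : ∀ x < k, (x ∈ I ↔ x ∈ J)) : prefixProd cs Q J k = prefixProd cs Q I k :=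
  mul_inv_eq_one.mp <| by
    rw [prefixProd_mul_inv_congr (Nat.zero_le k) fun x _ hx => h x hx, prefixProd_zero,
      prefixProd_zero, mul_inv_cancel]

theorem prefixProd_eq_of_agree_ge {Q : List B} {I J : Finset ℕ} {k m : ℕ} (hkm : k ≤ m)
    (h : ∀ x, k ≤ x → x < m → (x ∈ I ↔ x ∈ J))
    (hm : prefixProd cs Q I m = prefixProd cs Q J m) :
    prefixProd cs Q J k = prefixProd cs Q I k :=
  mul_inv_eq_one.mp <| by rw [← prefixProd_mul_inv_congr hkm h, hm, mul_inv_cancel]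

theorem prefixProd_eq_prefixRefl_mul {Q : List B} {I J : Finset ℕ} {i k : ℕ} (hik : i < k)
    (hi : i ∈ I) (hiJ : i ∉ J) (h : ∀ x < k, x ≠ i → (x ∈ I ↔ x ∈ J)) :
    prefixProd cs Q J k = prefixRefl cs Q I i * prefixProd cs Q I k := by
  rw [← mul_inv_eq_iff_eq_mul, prefixProd_mul_inv_congr (Nat.succ_le_of_lt hik)
    fun x hx hxk => h x hxk (by omega), prefixProd_succ, prefixProd_succ, if_pos hi, if_neg hiJ,
    prefixProd_eq_of_agree_lt fun x hx => h x (by omega) hx.ne, mul_one]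
  rfl

theorem IsCluster.prefixProd_flip {w : W} {Q : List B} {I J : Finset ℕ} {i j : ℕ}
    (hIc : IsCluster cs w Q I) (hJc : IsCluster cs w Q J) (hij : i < j) (hi : i ∈ I)
    (hJ : J = insert j (I.erase i)) :
    (∀ k ≤ i, prefixProd cs Q J k = prefixProd cs Q I k) ∧
      (∀ k, i < k → k ≤ j →
        prefixProd cs Q J k = prefixRefl cs Q I i * prefixProd cs Q I k) ∧
      ∀ k, j < k → k ≤ Q.length → prefixProd cs Q J k = prefixProd cs Q I k := by
  have hiJ : i ∉ J := by simp [hJ, hij.ne]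
  have hagree : ∀ x, x ≠ i → x ≠ j → (x ∈ I ↔ x ∈ J) := fun x hxi hxj => by
    simp [hJ, hxi, hxj]
  refine ⟨fun k hk => ?_, fun k hik hkj => ?_, fun k hjk hkm => ?_⟩
  · exact prefixProd_eq_of_agree_lt fun x hx => hagree x (by omega) (by omega)
  · exact prefixProd_eq_prefixRefl_mul hik hi hiJ fun x hx hxi => hagree x hxi (by omega)
  · exact prefixProd_eq_of_agree_ge hkm (fun x hx _ => hagree x (by omega) (by omega))
      (hIc.prefixProd_length.trans hJc.prefixProd_length.symm)

theorem rootFn_range_length [DecidableEq B] (rep : Representation ℝ W (B → ℝ))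
    {u : List B} (v : List B) {k : ℕ} (hk : k < u.length) :
    rootFn cs rep (u ++ v) (Finset.range u.length) k = sroot u[k] := by
  have hpos : complPos k (Finset.range u.length) = [] :=
    List.filter_eq_nil_iff.mpr fun x hx => by simp at hx ⊢; omega
  rw [rootFn_eq_prefixProd, prefixProd, hpos, List.getD_append _ _ _ _ hk,
    List.getD_eq_getElem _ _ hk]
  simp

end Prefix

theorem span_image_insert_erase_eq {K V ι : Type*} [Field K] [AddCommGroup V] [Module K V]
    [DecidableEq ι] {F G : ι → V} {I : Finset ι} {i j : ι} (hi : i ∈ I)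
    (hG : ∀ k ∈ I, k ≠ i → ∃ c : K, G k = F k + c • F i) {ε : K} (hε : ε ≠ 0)
    (hGj : G j = ε • F i) :
    span K (G '' ↑(insert j (I.erase i))) = span K (F '' ↑I) := by
  have hFi : F i ∈ span K (G '' ↑(insert j (I.erase i))) := by
    rw [← inv_smul_smul₀ hε (F i), ← hGj]
    exact smul_mem _ _ (subset_span ⟨j, by simp, rfl⟩)
  apply le_antisymm <;> rw [span_le] <;> rintro _ ⟨k, hk, rfl⟩
  · rcases Finset.mem_insert.mp hk with rfl | hk
    · rw [hGj]
      exact smul_mem _ _ (subset_span ⟨i, hi, rfl⟩)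
    · obtain ⟨c, hc⟩ := hG k (Finset.mem_of_mem_erase hk) (Finset.ne_of_mem_erase hk)
      rw [hc]
      exact add_mem (subset_span ⟨k, Finset.mem_of_mem_erase hk, rfl⟩)
        (smul_mem _ _ (subset_span ⟨i, hi, rfl⟩))
  · by_cases hki : k = i
    · exact hki ▸ hFi
    · obtain ⟨c, hc⟩ := hG k hk hki
      rw [eq_sub_of_add_eq hc.symm]
      exact sub_mem (subset_span ⟨k, by simp [hk, hki], rfl⟩) (smul_mem _ _ hFi)

section Geometric

variable {B : Type} [DecidableEq B]

theorem sroot_ne_zero (i : B) : sroot i ≠ 0 :=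
  Pi.single_ne_zero_iff.mpr one_ne_zero

variable [Fintype B] {M : CoxeterMatrix B} {W : Type} [Group W]

theorem bil_sroot_self (i : B) : bil M (sroot i) (sroot i) = 1 := by
  simp [bil, sroot, Pi.single_apply, Real.cos_pi]

def IsGeometric (cs : CoxeterSystem M W) (rep : Representation ℝ W (B → ℝ)) : Prop :=
  ∀ (i : B) (v : B → ℝ), rep (cs.simple i) v = v - (2 * bil M (sroot i) v) • sroot i

variable {cs : CoxeterSystem M W} {rep : Representation ℝ W (B → ℝ)}

theorem IsGeometric.apply_simple_sroot (hrep : IsGeometric cs rep) (i : B) :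
    rep (cs.simple i) (sroot i) = -sroot i := by
  rw [hrep, bil_sroot_self, mul_one, two_smul, sub_add_cancel_left]

theorem IsGeometric.apply_conj_simple (hrep : IsGeometric cs rep) (x : W) (i : B)
    (v : B → ℝ) :
    rep (x * cs.simple i * x⁻¹) v =
      v - (2 * bil M (sroot i) (rep x⁻¹ v)) • rep x (sroot i) := by
  rw [map_mul, map_mul, Module.End.mul_apply, Module.End.mul_apply, hrep, map_sub, map_smul,
    Representation.self_inv_apply]

theorem IsGeometric.exists_smul_of_conj_simple_eq (hrep : IsGeometric cs rep) {x y : W}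
    {a b : B} (h : x * cs.simple a * x⁻¹ = y * cs.simple b * y⁻¹) :
    ∃ γ : ℝ, γ ≠ 0 ∧ rep x (sroot a) = γ • rep y (sroot b) := by
  set v := rep y (sroot b)
  have hv : v ≠ 0 := fun hv => sroot_ne_zero b <| by
    simpa [v] using congrArg (rep y⁻¹) hv
  set c := 2 * bil M (sroot a) (rep x⁻¹ v)
  -- the reflection `y s_b y⁻¹` negates `v`; `x s_a x⁻¹` moves `v` by a multiple of `x αₐ`
  have hc : c • rep x (sroot a) = (2 : ℝ) • v := by
    have hneg : rep (y * cs.simple b * y⁻¹) v = -v := by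
      simp [v, map_mul, Module.End.mul_apply, hrep.apply_simple_sroot]
    rw [← h, hrep.apply_conj_simple] at hneg
    rw [two_smul]
    linear_combination (norm := module) -hneg
  have hc0 : c ≠ 0 := by
    rintro hc0
    rw [hc0, zero_smul, eq_comm, smul_eq_zero] at hc
    exact hv (hc.resolve_left two_ne_zero)
  exact ⟨2 / c, by positivity, by rw [div_eq_inv_mul, mul_smul, ← hc, inv_smul_smul₀ hc0]⟩

variable [Nonempty B]

theorem IsGeometric.rootFn_flip (hrep : IsGeometric cs rep) {w : W} {Q : List B}
    {I J : Finset ℕ} {i j : ℕ} (hIc : IsCluster cs w Q I) (hJc : IsCluster cs w Q J)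
    (hij : i < j) (hi : i ∈ I) (hj : j ∉ I) (hJ : J = insert j (I.erase i)) :
    (∀ k ∈ I, k ≠ i → ∃ c : ℝ,
        rootFn cs rep Q J k = rootFn cs rep Q I k + c • rootFn cs rep Q I i) ∧
      ∃ ε : ℝ, ε ≠ 0 ∧ rootFn cs rep Q J j = ε • rootFn cs rep Q I i := by
  obtain ⟨hlow, hmid, hhigh⟩ := hIc.prefixProd_flip hJc hij hi hJ
  have hjJ : j ∈ J := by simp [hJ]
  have hjm : j < Q.length := Finset.mem_range.mp (hJc.1 hjJ)
  -- the reflections at positions `j` and `i` of `I` coincide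
  have hPj : prefixProd cs Q I j * cs.simple (Q.getD j (arb B)) =
      prefixRefl cs Q I i * prefixProd cs Q I j := by
    have := hhigh (j + 1) (by omega) hjm
    rw [prefixProd_succ, prefixProd_succ, if_pos hjJ, if_neg hj, mul_one, hmid j hij le_rfl] at this
    exact this.symm
  refine ⟨fun k hk hki => ?_, ?_⟩
  · have hkj : k ≠ j := fun h => hj (h ▸ hk)
    rcases lt_or_gt_of_ne hki with hki | hik
    · exact ⟨0, by rw [zero_smul, add_zero, rootFn_eq_prefixProd, hlow k hki.le]; rfl⟩
    rcases lt_or_gt_of_ne hkj with hkj | hjk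
    · refine ⟨-(2 * bil M (sroot (Q.getD i (arb B)))
        (rep (prefixProd cs Q I i)⁻¹ (rootFn cs rep Q I k))), ?_⟩
      rw [rootFn_eq_prefixProd, hmid k hik hkj.le, map_mul, Module.End.mul_apply, prefixRefl,
        hrep.apply_conj_simple, neg_smul, ← sub_eq_add_neg]
      rfl
    · have hkm : k < Q.length := Finset.mem_range.mp (hIc.1 hk)
      exact ⟨0, by rw [zero_smul, add_zero, rootFn_eq_prefixProd, hhigh k hjk hkm.le]; rfl⟩
  · obtain ⟨γ, hγ, hγe⟩ := hrep.exists_smul_of_conj_simple_eq (x := prefixProd cs Q I j)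
      (a := Q.getD j (arb B)) (y := prefixProd cs Q I i) (b := Q.getD i (arb B))
      (by rw [hPj, mul_inv_cancel_right]; rfl)
    refine ⟨-γ, neg_ne_zero.mpr hγ, ?_⟩
    rw [rootFn_eq_prefixProd, hmid j hij le_rfl, ← hPj, map_mul, Module.End.mul_apply,
      hrep.apply_simple_sroot, map_neg, hγe, neg_smul]
    rfl

theorem IsGeometric.span_rootFn_eq_of_isFlip (hrep : IsGeometric cs rep) {w : W} {Q : List B}
    {I J : Finset ℕ} (h : IsFlip cs w Q I J) :
    span ℝ (rootFn cs rep Q J '' J) = span ℝ (rootFn cs rep Q I '' I) := by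
  have key : ∀ {I J : Finset ℕ} {i j : ℕ}, IsCluster cs w Q I → IsCluster cs w Q J →
      i < j → i ∈ I → j ∉ I → J = insert j (I.erase i) →
      span ℝ (rootFn cs rep Q J '' J) = span ℝ (rootFn cs rep Q I '' I) := by
    intro I J i j hI hJ hij hi hj hJe
    obtain ⟨hG, ε, hε, hGj⟩ := hrep.rootFn_flip hI hJ hij hi hj hJe
    have := span_image_insert_erase_eq hi hG hε hGj
    rwa [← hJe] at this
  obtain ⟨hI, hJ, i, hi, j, hj, hJe⟩ := h
  rcases lt_or_gt_of_ne (ne_of_mem_of_not_mem hi hj) with hij | hji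
  · exact key hI hJ hij hi hj hJe
  · refine (key hJ hI hji (by simp [hJe]) (by simp [hJe, hji.ne']) ?_).symm
    rw [hJe, Finset.erase_insert fun h => hj (Finset.mem_of_mem_erase h), Finset.insert_erase hi]

theorem IsGeometric.span_rootFn_eq_of_reflTransGen (hrep : IsGeometric cs rep) {w : W}
    {Q : List B} {I J : Finset ℕ} (h : Relation.ReflTransGen (IsFlip cs w Q) I J) :
    span ℝ (rootFn cs rep Q J '' J) = span ℝ (rootFn cs rep Q I '' I) := by
  induction h with
  | refl => rfl
  | tail _ hflip ih => rw [hrep.span_rootFn_eq_of_isFlip hflip, ih]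

theorem span_rootFn_range_length (rep : Representation ℝ W (B → ℝ)) {u : List B}
    (hu : ∀ i, i ∈ u) (v : List B) :
    span ℝ (rootFn cs rep (u ++ v) (Finset.range u.length) '' ↑(Finset.range u.length)) =
      ⊤ := by
  rw [eq_top_iff, ← (Pi.basisFun ℝ B).span_eq]
  refine span_mono ?_
  rintro _ ⟨i, rfl⟩
  obtain ⟨k, hk, rfl⟩ := List.getElem_of_mem (hu i)
  exact ⟨k, by simpa using hk, by rw [rootFn_range_length rep v hk, Pi.basisFun_apply]; rfl⟩

end Geometric

theorem length_eq_card_of_nodup_of_forall_mem {α : Type*} [Fintype α] {l : List α}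
    (hl : l.Nodup) (h : ∀ a, a ∈ l) : l.length = Fintype.card α := by
  classical
  rw [← List.toFinset_card_of_nodup hl, ← Finset.card_univ]
  congr
  ext a
  simp [h a]

theorem statement_18_general
    {B : Type} [DecidableEq B] [Fintype B] [Nonempty B]
    {M : CoxeterMatrix B} {W : Type} [Group W]
    (cs : CoxeterSystem M W)
    (π : Representation ℝ W (B → ℝ))
    (hgeom : ∀ (i : B) (v : B → ℝ),
      π (cs.simple i) v = v - (2 * bil M (sroot i) v) • sroot i)
    (w₀ : W)
    (cword : List B) (hcnodup : cword.Nodup) (hcfull : ∀ i : B, i ∈ cword)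
    (sw : List B) (hsw : IsRW cs w₀ sw)
    (I : Finset ℕ) (hI : IsCluster cs w₀ (cword ++ sw) I) :
    LinearIndependent ℝ (fun i : I => rootFn cs π (cword ++ sw) I (i : ℕ)) ∧
      Submodule.span ℝ (Set.range (fun i : I => rootFn cs π (cword ++ sw) I (i : ℕ))) = ⊤ ∧
      (∀ i ∈ I, ∀ j ∈ I, rootFn cs π (cword ++ sw) I i = rootFn cs π (cword ++ sw) I j → i = j) := by
  have hspan : span ℝ (Set.range fun i : I => rootFn cs π (cword ++ sw) I i) = ⊤ := by
    have himage : (Set.range fun i : I => rootFn cs π (cword ++ sw) I i) =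
        rootFn cs π (cword ++ sw) I '' I := by
      ext
      simp
    rw [himage, ← span_rootFn_range_length π hcfull sw]
    exact IsGeometric.span_rootFn_eq_of_reflTransGen hgeom
      (reflTransGen_isFlip (isCluster_range_length cword hsw) hI)
  have hcard : Fintype.card I = Module.finrank ℝ (B → ℝ) := by
    have hcB := length_eq_card_of_nodup_of_forall_mem hcnodup hcfull
    have := hI.card_add_length
    rw [List.length_append, hsw.2] at this
    rw [Fintype.card_coe, Module.finrank_fintype_fun_eq_card]
    omega
  have hli := linearIndependent_of_top_le_span_of_card_eq_finrank hspan.ge hcard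
  exact ⟨hli, hspan, fun i hi j hj h =>
    congrArg Subtype.val (hli.injective (a₁ := ⟨i, hi⟩) (a₂ := ⟨j, hj⟩) h)⟩

theorem statement_18
    {B : Type} [DecidableEq B] [Fintype B] [Nonempty B]
    {M : CoxeterMatrix B} {W : Type} [Group W] [Finite W]
    (cs : CoxeterSystem M W)
    (hcrys : ∀ i j : B, i ≠ j → M i j ∈ ({2, 3, 4, 6} : Set ℕ))
    (π : Representation ℝ W (B → ℝ))
    (hgeom : ∀ (i : B) (v : B → ℝ),
      π (cs.simple i) v = v - (2 * bil M (sroot i) v) • sroot i)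
    (w₀ : W)
    (hw₀max : ∀ w : W, cs.length w ≤ cs.length w₀)
    (hw₀uniq : ∀ w : W, cs.length w = cs.length w₀ → w = w₀)
    (cword : List B) (hcnodup : cword.Nodup) (hcfull : ∀ i : B, i ∈ cword)
    (sw : List B) (hsw : IsRW cs w₀ sw)
    (pos : Fin sw.length → ℕ) (hposmono : StrictMono pos)
    (hposlet : ∀ k : Fin sw.length, sw.get k = cInf cword (pos k))
    (hposlex : ∀ g : Fin sw.length → ℕ, StrictMono g →
      IsRW cs w₀ (List.ofFn fun k => cInf cword (g k)) → LexLE pos g)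
    (I : Finset ℕ) (hI : IsCluster cs w₀ (cword ++ sw) I) :
    LinearIndependent ℝ (fun i : I => rootFn cs π (cword ++ sw) I (i : ℕ)) ∧
      Submodule.span ℝ (Set.range (fun i : I => rootFn cs π (cword ++ sw) I (i : ℕ))) = ⊤ ∧
      (∀ i ∈ I, ∀ j ∈ I, rootFn cs π (cword ++ sw) I i = rootFn cs π (cword ++ sw) I j → i = j) :=
  statement_18_general cs π hgeom w₀ cword hcnodup hcfull sw hsw I hI

end CP
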